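/- arXiv:2401.17502 — 12 statements merged into one kernel-verified Lean document; each statement's English description precedes it below -/
import Mathlib

section
/- Let k, l ≥ 1 be integers, n = 2^k and m = 2^l. Then for every tuple u ∈ (ZMod m)^n, D^{(l+1)·2^{k-1}}(u) = (0, 0, …, 0). In particular every Ducci sequence in ℤ_{2^l}^{2^k} vanishes and the period of every tuple is 1. -/
open Polynomial

/-- The Ducci map on `(ZMod m)^n` with cyclic indexing:
`D(x_1,…,x_n) = (x_1+x_2, x_2+x_3, …, x_n+x_1)`. -/
def ducci (n m : ℕ) (x : Fin n → ZMod m) : Fin n → ZMod m :=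
  fun i => x i + x ⟨(i.val + 1) % n, Nat.mod_lt _ i.pos⟩

/-- The cyclic shift as a linear endomorphism. -/
def rotMap (n m : ℕ) : (Fin n → ZMod m) →ₗ[ZMod m] (Fin n → ZMod m) where
  toFun x := fun i => x ⟨(i.val + 1) % n, Nat.mod_lt _ i.pos⟩
  map_add' _ _ := rfl
  map_smul' _ _ := rfl

lemma rotMap_pow_apply (n m α : ℕ) (x : Fin n → ZMod m) (i : Fin n) :
    ((rotMap n m) ^ α) x i = x ⟨(i.val + α) % n, Nat.mod_lt _ i.pos⟩ := by
  induction α generalizing x with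
  | zero => simp [Nat.mod_eq_of_lt i.isLt]
  | succ α ih =>
      rw [pow_succ, Module.End.mul_apply, ih]
      show x ⟨((i.val + α) % n + 1) % n, _⟩ = _
      congr 1
      exact Fin.ext (by simp [Nat.mod_add_mod, Nat.add_assoc])

lemma rotMap_pow_self (n m : ℕ) : (rotMap n m) ^ n = 1 := by
  refine LinearMap.ext fun x => funext fun i => ?_
  rw [rotMap_pow_apply]
  show x _ = x i
  congr 1
  exact Fin.ext (by simp [Nat.add_mod_right, Nat.mod_eq_of_lt i.isLt])

lemma base_poly (e : ℕ) : ∃ p : ℤ[X], (1 + X) ^ (2 ^ e) = 1 + X ^ (2 ^ e) + 2 * p := by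
  have hdvd : (C (2:ℤ)) ∣ ((1 + X) ^ (2 ^ e) - 1 - X ^ (2 ^ e)) := by
    rw [Polynomial.C_dvd_iff_dvd_coeff]
    intro i
    have h0 : Polynomial.map (Int.castRingHom (ZMod 2))
        ((1 + X) ^ (2 ^ e) - 1 - X ^ (2 ^ e) : ℤ[X]) = 0 := by
      simp only [Polynomial.map_sub, Polynomial.map_pow, Polynomial.map_add,
        Polynomial.map_one, Polynomial.map_X]
      rw [add_pow_char_pow]
      ring
    have := congrArg (fun g => Polynomial.coeff g i) h0
    simp only [Polynomial.coeff_map, Polynomial.coeff_zero] at this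
    exact (ZMod.intCast_zmod_eq_zero_iff_dvd _ 2).mp this
  obtain ⟨p, hp⟩ := hdvd
  refine ⟨p, ?_⟩
  have : (C (2:ℤ)) = (2 : ℤ[X]) := by norm_num
  rw [this] at hp
  linear_combination hp

lemma key_poly (h : ℕ) (p₀ : ℤ[X]) (hp₀ : (1 + X) ^ h = 1 + X ^ h + 2 * p₀) (j : ℕ) :
    ∃ r p q : ℤ[X], (1 + X) ^ ((j + 1) * h) =
      2 ^ j * ((1 + X ^ h) * r) + 2 ^ (j + 1) * p + (X ^ (2 * h) - 1) * q := by
  induction j with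
  | zero =>
      refine ⟨1, p₀, 0, ?_⟩
      have h1 : (0 + 1) * h = h := by ring
      rw [h1, hp₀]; ring
  | succ j ih =>
      obtain ⟨r, p, q, hrq⟩ := ih
      refine ⟨r + r * p₀ + p, p * p₀, 2 ^ j * r + q * (1 + X ^ h + 2 * p₀), ?_⟩
      have hexp : (j + 1 + 1) * h = (j + 1) * h + h := by ring
      rw [hexp, pow_add, hrq, hp₀]
      have hx : (X : ℤ[X]) ^ (2 * h) = X ^ h * X ^ h := by
        rw [two_mul, pow_add]
      rw [hx]
      ring

/-- For `n = 2^k`, `m = 2^l`, every tuple vanishes after `(l+1)·2^(k-1)` steps. -/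
theorem ducci_vanishes (k l : ℕ) (hk : 1 ≤ k) (hl : 1 ≤ l)
    (u : Fin (2 ^ k) → ZMod (2 ^ l)) :
    (ducci (2 ^ k) (2 ^ l))^[(l + 1) * 2 ^ (k - 1)] u = 0 := by
  obtain ⟨p₀, hp₀⟩ := base_poly (k - 1)
  obtain ⟨r, p, q, hrq⟩ := key_poly (2 ^ (k - 1)) p₀ hp₀ l
  set S := rotMap (2 ^ k) (2 ^ l) with hSdef
  have h2h : 2 * 2 ^ (k - 1) = 2 ^ k := by
    rw [← pow_succ']
    congr 1
    omega
  have hSn : S ^ (2 * 2 ^ (k - 1)) = 1 := by rw [h2h]; exact rotMap_pow_self _ _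
  have h0 : ((2 : ZMod (2 ^ l))) ^ l = 0 := by
    have h := ZMod.natCast_self (2 ^ l)
    push_cast at h
    exact h
  have h2E : (2 : Module.End (ZMod (2 ^ l)) (Fin (2 ^ k) → ZMod (2 ^ l))) ^ l = 0 := by
    have : (2 : Module.End (ZMod (2 ^ l)) (Fin (2 ^ k) → ZMod (2 ^ l)))
        = algebraMap (ZMod (2 ^ l)) _ 2 := by rw [map_ofNat]
    rw [this, ← map_pow, h0, map_zero]
  have hduc : ducci (2 ^ k) (2 ^ l) = ⇑(1 + S) := by
    funext x
    funext i
    simp [ducci, hSdef, rotMap, LinearMap.add_apply]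
  have hiter : (ducci (2 ^ k) (2 ^ l))^[(l + 1) * 2 ^ (k - 1)] u
      = ((1 + S) ^ ((l + 1) * 2 ^ (k - 1))) u := by
    rw [hduc]
    exact (Module.End.pow_apply _ _ _).symm
  rw [hiter]
  have hev : (1 + S) ^ ((l + 1) * 2 ^ (k - 1))
      = Polynomial.aeval S ((1 + X : ℤ[X]) ^ ((l + 1) * 2 ^ (k - 1))) := by
    simp
  rw [hev, hrq]
  simp only [map_add, map_mul, map_pow, map_sub, map_one, Polynomial.aeval_X, map_ofNat]
  rw [hSn, pow_succ, h2E]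
  simp
end

section
/- Let k, l ≥ 1 be integers, n = 2^k and m = 2^l, and let e = (0, 0, …, 0, 1) ∈ (ZMod m)^n. Then D^{(l+1)·2^{k-1} − 1}(e) ≠ (0, 0, …, 0). Together with the vanishing of D^{(l+1)·2^{k-1}}(e), this shows L_{2^l}(2^k) = (l+1)·2^{k-1}, i.e., the length of the basic Ducci sequence is exactly (l+1)·2^{k-1}. -/
open Polynomial Finset

namespace DucciAux

variable (n : ℕ)

/-- cyclic shift -/
def T : Module.End ℤ (Fin n → ℤ) where
  toFun x := fun i => x ⟨((i : ℕ) + 1) % n, Nat.mod_lt _ i.pos⟩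
  map_add' x y := rfl
  map_smul' c x := rfl

lemma T_apply (x : Fin n → ℤ) (i : Fin n) :
    T n x i = x ⟨((i : ℕ) + 1) % n, Nat.mod_lt _ i.pos⟩ := rfl

lemma T_pow_apply (j : ℕ) (x : Fin n → ℤ) (i : Fin n) :
    ((T n) ^ j) x i = x ⟨((i : ℕ) + j) % n, Nat.mod_lt _ i.pos⟩ := by
  induction j generalizing x with
  | zero => simp [Fin.ext_iff, Nat.mod_eq_of_lt i.isLt]
  | succ j ih =>
    rw [pow_succ, Module.End.mul_apply, ih, T_apply]
    congr 1
    ext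
    simp only [Nat.mod_add_mod]
    congr 1
    

lemma T_pow_n : (T n) ^ n = 1 := by
  apply LinearMap.ext
  intro x
  funext i
  rw [T_pow_apply]
  simp [Fin.ext_iff, Nat.add_mod_right, Nat.mod_eq_of_lt i.isLt]

/-- all-ones vector -/
def sig : Fin n → ℤ := fun _ => 1

/-- basic vector -/
def ee : Fin n → ℤ := fun i => if (i : ℕ) = n - 1 then 1 else 0

lemma T_pow_sig (j : ℕ) : ((T n) ^ j) (sig n) = sig n := by
  funext i; rw [T_pow_apply]; rfl

lemma sum_T_pow_ee : ∑ j ∈ range n, ((T n) ^ j) (ee n) = sig n := by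
  funext i
  have hn : 0 < n := i.pos
  rw [Finset.sum_apply]
  simp only [T_pow_apply, ee]
  rw [Finset.sum_congr rfl (g := fun j => if j = n - 1 - (i : ℕ) then (1:ℤ) else 0)]
  · rw [Finset.sum_ite_eq' (range n) (n - 1 - (i:ℕ)) (fun _ => (1:ℤ))]
    simp only [Finset.mem_range]
    rw [if_pos (by omega)]
    rfl
  · intro j hj
    rw [Finset.mem_range] at hj
    have hi : (i : ℕ) < n := i.isLt
    congr 1
    simp only [eq_iff_iff]
    rcases Nat.lt_or_ge ((i : ℕ) + j) n with h | h
    · rw [Nat.mod_eq_of_lt h]; omega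
    · have : ((i:ℕ) + j) % n = (i:ℕ) + j - n := by
        rw [Nat.mod_eq_sub_mod h, Nat.mod_eq_of_lt (by omega)]
      rw [this]; omega


/-- the quotient ring ℤ[X]/(X^n - 1) -/
abbrev Q (n : ℕ) := Polynomial ℤ ⧸ Ideal.span {(X : Polynomial ℤ) ^ n - 1}

/-- image of X in Q -/
noncomputable def xq : Q n := Ideal.Quotient.mk _ X

lemma xq_pow_n : (xq n) ^ n = 1 := by
  have : (Ideal.Quotient.mk (Ideal.span {(X : Polynomial ℤ) ^ n - 1}))
      ((X : Polynomial ℤ) ^ n - 1) = 0 := by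
    rw [Ideal.Quotient.eq_zero_iff_mem]
    exact Ideal.mem_span_singleton_self _
  rw [map_sub, map_pow, map_one, sub_eq_zero] at this
  exact this

/-- evaluation of Q at the shift operator -/
noncomputable def chi : Q n →+* Module.End ℤ (Fin n → ℤ) :=
  Ideal.Quotient.lift _ (aeval (T n)).toRingHom (by
    intro f hf
    rw [Ideal.mem_span_singleton'] at hf
    obtain ⟨g, rfl⟩ := hf
    simp only [AlgHom.toRingHom_eq_coe, RingHom.coe_coe, map_mul, map_sub, map_pow, aeval_X,
      map_one, T_pow_n, sub_self, mul_zero])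

lemma chi_xq : chi n (xq n) = T n := by
  simp [chi, xq, Ideal.Quotient.lift_mk]


/-- binomial coefficients of 2^t - 1 are odd -/
lemma odd_choose_pow_sub_one (t : ℕ) : ∀ j, j ≤ 2 ^ t - 1 → Odd ((2 ^ t - 1).choose j) := by
  have h1 : 1 ≤ 2 ^ t := Nat.one_le_two_pow
  intro j
  induction j with
  | zero => intro _; simp
  | succ j ih =>
    intro hj
    have hodd : Odd ((2 ^ t - 1).choose j) := ih (by omega)
    have heven : 2 ∣ (2 ^ t).choose (j + 1) :=
      Nat.Prime.dvd_choose_pow Nat.prime_two (by omega) (by omega)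
    have hpascal : (2 ^ t).choose (j + 1)
        = (2 ^ t - 1).choose j + (2 ^ t - 1).choose (j + 1) := by
      rw [show 2 ^ t = (2 ^ t - 1) + 1 by omega]
      exact Nat.choose_succ_succ' _ _
    rw [hpascal] at heven
    rcases hodd with ⟨a, ha⟩
    rcases heven with ⟨b, hb⟩
    exact ⟨b - a - 1, by omega⟩

lemma even_choose_pow (t : ℕ) (j : ℕ) (h0 : 0 < j) (hj : j < 2 ^ t) :
    2 ∣ (2 ^ t).choose j :=
  Nat.Prime.dvd_choose_pow Nat.prime_two (by omega) (by omega)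

/-- sum of halved binomial coefficients of s = 2^t -/
lemma sum_half_choose (t : ℕ) (ht : 1 ≤ t) :
    ∑ j ∈ range (2 ^ t + 1), (2 ^ t).choose j / 2 = 2 ^ (2 ^ t - 1) - 1 := by
  have hs2 : 2 ≤ 2 ^ t := by
    calc 2 = 2 ^ 1 := rfl
    _ ≤ 2 ^ t := Nat.pow_le_pow_right (by norm_num) ht
  have key : ∑ j ∈ range (2 ^ t + 1), (2 ^ t).choose j
      = ∑ j ∈ range (2 ^ t + 1),
        (2 * ((2 ^ t).choose j / 2) + ((if j = 0 then 1 else 0) + (if j = 2 ^ t then 1 else 0))) := by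
    apply Finset.sum_congr rfl
    intro j hj
    rw [Finset.mem_range] at hj
    by_cases h0 : j = 0
    · subst h0; simp; omega
    · by_cases hs : j = 2 ^ t
      · subst hs; simp
      · have := even_choose_pow t j (by omega) (by omega)
        rw [if_neg h0, if_neg hs, Nat.mul_div_cancel' this]
        omega
  rw [Nat.sum_range_choose] at key
  rw [Finset.sum_add_distrib, Finset.sum_add_distrib, ← Finset.mul_sum] at key
  rw [Finset.sum_ite_eq' (range (2 ^ t + 1)) 0 (fun _ => 1),
    Finset.sum_ite_eq' (range (2 ^ t + 1)) (2 ^ t) (fun _ => 1)] at key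
  simp only [Finset.mem_range, if_pos (by omega : 0 < 2 ^ t + 1),
    if_pos (by omega : 2 ^ t < 2 ^ t + 1)] at key
  have hp : 2 ^ 2 ^ t = 2 * 2 ^ (2 ^ t - 1) := by
    rw [← pow_succ']
    congr 1
    omega
  omega


noncomputable def sigq (n : ℕ) : Q n := ∑ j ∈ range n, (xq n) ^ j

lemma xq_mul_sigq (n : ℕ) : xq n * sigq n = sigq n := by
  rcases Nat.eq_zero_or_pos n with h | h
  · subst h
    simp [sigq]
  · unfold sigq
    rw [Finset.mul_sum]
    have h1 := Finset.sum_range_succ' (fun j => (xq n) ^ j) n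
    have h2 := Finset.sum_range_succ (fun j => (xq n) ^ j) n
    have h3 : ∀ j, xq n * xq n ^ j = xq n ^ (j + 1) := fun j => (pow_succ' _ _).symm
    rw [Finset.sum_congr rfl (fun j _ => h3 j)]
    have h4 := xq_pow_n n
    have h5 : (xq n) ^ 0 = 1 := pow_zero _
    -- h1 : ∑_{range (n+1)} = ∑_{range n} f (j+1) + f 0
    -- h2 : ∑_{range (n+1)} = ∑_{range n} f j + f n
    rw [h2] at h1
    rw [h4, h5] at h1
    exact (add_right_cancel h1.symm)

lemma xq_pow_mul_sigq (n : ℕ) (j : ℕ) : (xq n) ^ j * sigq n = sigq n := by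
  induction j with
  | zero => simp
  | succ j ih => rw [pow_succ, mul_assoc, xq_mul_sigq n, ih]

lemma chi_sigq_ee (n : ℕ) : chi n (sigq n) (ee n) = sig n := by
  unfold sigq
  rw [map_sum]
  rw [LinearMap.coe_sum, Finset.sum_apply]
  rw [← sum_T_pow_ee n]
  apply Finset.sum_congr rfl
  intro j _
  rw [map_pow, chi_xq]

lemma chi_intCast_apply (n : ℕ) (c : ℤ) (v : Fin n → ℤ) :
    chi n ((c : ℤ) : Q n) v = c • v := by
  rw [map_intCast]
  exact Module.End.intCast_apply c v

lemma cancel2 (n : ℕ) (v w : Fin n → ℤ) (h : (2:ℤ) • v = (2:ℤ) • w) : v = w := by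
  funext i
  have := congrFun h i
  simp only [Pi.smul_apply, smul_eq_mul] at this
  omega


lemma expand_pow (n N : ℕ) :
    (1 + xq n) ^ N = ∑ j ∈ range (N + 1), (xq n) ^ j * ((N.choose j : ℕ) : Q n) := by
  rw [add_comm, add_pow]
  simp

/-- the element h with (1+x)^s = (1+x^s) + 2h -/
noncomputable def hqe (t : ℕ) : Q (2 ^ (t+1)) :=
  ∑ j ∈ range (2 ^ t + 1), (((2 ^ t).choose j / 2 : ℕ) : Q (2 ^ (t+1))) * (xq (2 ^ (t+1))) ^ j

/-- the element b with (1+x)^(n-1) = sigma + 2b -/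
noncomputable def b1 (t : ℕ) : Q (2 ^ (t+1)) :=
  ∑ j ∈ range (2 ^ (t+1)),
    (((2 ^ (t+1) - 1).choose j / 2 : ℕ) : Q (2 ^ (t+1))) * (xq (2 ^ (t+1))) ^ j

lemma u_pow_s (t : ℕ) (ht : 1 ≤ t) :
    (1 + xq (2 ^ (t+1))) ^ (2 ^ t)
      = (1 + (xq (2 ^ (t+1))) ^ (2 ^ t)) + 2 * hqe t := by
  have hs2 : 2 ≤ 2 ^ t := by
    calc 2 = 2 ^ 1 := rfl
    _ ≤ 2 ^ t := Nat.pow_le_pow_right (by norm_num) ht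
  rw [expand_pow]
  have key : ∀ j ∈ range (2 ^ t + 1),
      (xq (2 ^ (t+1))) ^ j * (((2 ^ t).choose j : ℕ) : Q (2 ^ (t+1)))
        = (if j = 0 then 1 else 0) + (if j = 2 ^ t then (xq (2 ^ (t+1))) ^ (2 ^ t) else 0)
          + 2 * ((((2 ^ t).choose j / 2 : ℕ) : Q (2 ^ (t+1))) * (xq (2 ^ (t+1))) ^ j) := by
    intro j hj
    rw [Finset.mem_range] at hj
    by_cases h0 : j = 0
    · subst h0
      rw [if_pos rfl, if_neg (by omega)]
      norm_num
    · by_cases hs : j = 2 ^ t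
      · subst hs
        rw [if_neg (by omega), if_pos rfl]
        norm_num
      · rw [if_neg h0, if_neg hs]
        have hdvd := even_choose_pow t j (by omega) (by omega)
        obtain ⟨c, hc⟩ : ∃ c, (2 ^ t).choose j = 2 * c := hdvd
        rw [hc, show 2 * c / 2 = c by omega]
        push_cast
        ring
  rw [Finset.sum_congr rfl key, Finset.sum_add_distrib, Finset.sum_add_distrib]
  rw [Finset.sum_ite_eq' (range (2 ^ t + 1)) 0 (fun _ => (1 : Q (2 ^ (t+1)))),
    Finset.sum_ite_eq' (range (2 ^ t + 1)) (2 ^ t) (fun _ => (xq (2 ^ (t+1))) ^ (2 ^ t))]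
  rw [if_pos (by rw [Finset.mem_range]; omega), if_pos (by rw [Finset.mem_range]; omega)]
  rw [← Finset.mul_sum]
  rfl

lemma u_pow_n_sub_one (t : ℕ) :
    (1 + xq (2 ^ (t+1))) ^ (2 ^ (t+1) - 1) = sigq (2 ^ (t+1)) + 2 * b1 t := by
  have h1 : 1 ≤ 2 ^ (t+1) := Nat.one_le_two_pow
  rw [expand_pow, show 2 ^ (t+1) - 1 + 1 = 2 ^ (t+1) by omega]
  have key : ∀ j ∈ range (2 ^ (t+1)),
      (xq (2 ^ (t+1))) ^ j * (((2 ^ (t+1) - 1).choose j : ℕ) : Q (2 ^ (t+1)))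
        = (xq (2 ^ (t+1))) ^ j
          + 2 * ((((2 ^ (t+1) - 1).choose j / 2 : ℕ) : Q (2 ^ (t+1))) * (xq (2 ^ (t+1))) ^ j) := by
    intro j hj
    rw [Finset.mem_range] at hj
    have hodd := odd_choose_pow_sub_one (t+1) j (by omega)
    rw [Nat.odd_iff] at hodd
    obtain ⟨c, hc⟩ : ∃ c, (2 ^ (t+1) - 1).choose j = 2 * c + 1 := ⟨(2 ^ (t+1) - 1).choose j / 2, by omega⟩
    rw [hc, show (2 * c + 1) / 2 = c by omega]
    push_cast
    ring
  rw [Finset.sum_congr rfl key, Finset.sum_add_distrib, ← Finset.mul_sum]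
  rfl

lemma hqe_mul_sigq (t : ℕ) (ht : 1 ≤ t) :
    hqe t * sigq (2 ^ (t+1))
      = (((2 ^ (2 ^ t - 1) - 1 : ℕ)) : Q (2 ^ (t+1))) * sigq (2 ^ (t+1)) := by
  unfold hqe
  rw [Finset.sum_mul]
  have key : ∀ j ∈ range (2 ^ t + 1),
      (((2 ^ t).choose j / 2 : ℕ) : Q (2 ^ (t+1))) * (xq (2 ^ (t+1))) ^ j * sigq (2 ^ (t+1))
        = (((2 ^ t).choose j / 2 : ℕ) : Q (2 ^ (t+1))) * sigq (2 ^ (t+1)) := by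
    intro j _
    rw [mul_assoc, xq_pow_mul_sigq]
  rw [Finset.sum_congr rfl key, ← Finset.sum_mul, ← Nat.cast_sum, sum_half_choose t ht]

lemma p_sq (t : ℕ) :
    (1 + (xq (2 ^ (t+1))) ^ (2 ^ t)) ^ 2 = 2 * (1 + (xq (2 ^ (t+1))) ^ (2 ^ t)) := by
  have hx : (xq (2 ^ (t+1))) ^ (2 ^ t) * (xq (2 ^ (t+1))) ^ (2 ^ t) = 1 := by
    rw [← pow_add, show 2 ^ t + 2 ^ t = 2 ^ (t+1) by ring]
    exact xq_pow_n _
  linear_combination hx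


lemma chi_mul_apply (n : ℕ) (q r : Q n) (v : Fin n → ℤ) :
    chi n (q * r) v = chi n q (chi n r v) := by
  rw [map_mul]; rfl

lemma chi_of_mul_sigq (n : ℕ) (q : Q n) (c : ℤ) (h : q * sigq n = ((c : ℤ) : Q n) * sigq n) :
    chi n q (sig n) = c • sig n := by
  have h2 : chi n (q * sigq n) (ee n) = chi n (((c : ℤ) : Q n) * sigq n) (ee n) := by rw [h]
  rw [chi_mul_apply, chi_mul_apply, chi_sigq_ee, chi_intCast_apply] at h2
  exact h2

lemma u_mul_sigq (n : ℕ) : (1 + xq n) * sigq n = (((2:ℤ)) : Q n) * sigq n := by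
  have := xq_mul_sigq n
  push_cast
  linear_combination this

lemma p_mul_sigq (n j : ℕ) : (1 + (xq n) ^ j) * sigq n = (((2:ℤ)) : Q n) * sigq n := by
  have := xq_pow_mul_sigq n j
  push_cast
  linear_combination this

lemma chi_u_sig (n : ℕ) : chi n (1 + xq n) (sig n) = (2:ℤ) • sig n :=
  chi_of_mul_sigq n _ 2 (u_mul_sigq n)

lemma chi_p_sig (n j : ℕ) : chi n (1 + (xq n) ^ j) (sig n) = (2:ℤ) • sig n :=
  chi_of_mul_sigq n _ 2 (p_mul_sigq n j)

lemma chi_u_pow_sig (n : ℕ) (j : ℕ) :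
    chi n ((1 + xq n) ^ j) (sig n) = ((2:ℤ) ^ j) • sig n := by
  induction j with
  | zero => simp
  | succ j ih =>
    rw [pow_succ, chi_mul_apply, chi_u_sig, map_smul, ih, smul_smul, pow_succ]
    ring_nf

lemma chi_hqe_sig (t : ℕ) (ht : 1 ≤ t) :
    chi (2 ^ (t+1)) (hqe t) (sig (2 ^ (t+1)))
      = (((2 ^ (2 ^ t - 1) - 1 : ℕ) : ℤ)) • sig (2 ^ (t+1)) := by
  apply chi_of_mul_sigq
  rw [hqe_mul_sigq t ht]
  norm_cast

lemma hd_aux (t : ℕ) (ht : 1 ≤ t) :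
    ((2 ^ (2 ^ t - 2) - 1 : ℕ) : ℤ) = (2:ℤ) ^ (2 ^ t - 2) - 1 := by
  have e1 : (1:ℕ) ≤ 2 ^ (2 ^ t - 2) := Nat.one_le_two_pow
  push_cast [Nat.cast_sub e1]
  ring

lemma main_even (t : ℕ) (ht : 1 ≤ t) :
    ∀ l, 1 ≤ l →
    ∃ B C : Fin (2 ^ (t+1)) → ℤ,
      chi (2 ^ (t+1)) ((1 + xq (2 ^ (t+1))) ^ ((l+1) * 2 ^ t - 1)) (ee (2 ^ (t+1)))
          = (2:ℤ) ^ (l-1) • sig (2 ^ (t+1)) + (2:ℤ) ^ l • B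
        ∧ chi (2 ^ (t+1)) (1 + (xq (2 ^ (t+1))) ^ (2 ^ t)) B
          = sig (2 ^ (t+1)) + (2:ℤ) • C := by
  have hs2 : 2 ≤ 2 ^ t := by
    calc 2 = 2 ^ 1 := rfl
    _ ≤ 2 ^ t := Nat.pow_le_pow_right (by norm_num) ht
  have hn : 2 ^ (t+1) = 2 * 2 ^ t := by rw [pow_succ]; ring
  set n := 2 ^ (t+1) with hndef
  set s := 2 ^ t with hsdef
  set u : Q n := 1 + xq n with hu
  set p : Q n := 1 + (xq n) ^ s with hp
  set σ : Fin n → ℤ := sig n with hσ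
  set H : Q n := hqe t with hH
  have hus : u ^ s = p + 2 * H := u_pow_s t ht
  have hp2 : p ^ 2 = 2 * p := p_sq t
  have hsplit : u ^ (n - 1) = u ^ (s - 1) * u ^ s := by
    rw [← pow_add]
    congr 1
    omega
  have hc1 : ((2 ^ (s - 1) - 1 : ℕ) : ℤ) = 1 + 2 * ((2 ^ (s - 2) - 1 : ℕ) : ℤ) := by
    have e1 : (1:ℕ) ≤ 2 ^ (s - 2) := Nat.one_le_two_pow
    have e2 : 2 ^ (s - 1) = 2 * 2 ^ (s - 2) := by
      rw [← pow_succ']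
      congr 1
      omega
    have e3 : (1:ℕ) ≤ 2 ^ (s-1) := Nat.one_le_two_pow
    omega
  have hchiH : chi n H σ = ((2 ^ (s - 1) - 1 : ℕ) : ℤ) • σ := chi_hqe_sig t ht
  intro l hl
  induction l, hl using Nat.le_induction with
  | base =>
    -- exponent is n - 1
    have hexp : (1+1) * s - 1 = n - 1 := by omega
    rw [hexp]
    have hbase : chi n (u ^ (n-1)) (ee n) = σ + (2:ℤ) • (chi n (b1 t) (ee n)) := by
      rw [u_pow_n_sub_one t]
      rw [map_add, LinearMap.add_apply, chi_sigq_ee]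
      congr 1
      rw [show (2 : Q n) * b1 t = (((2:ℤ)) : Q n) * b1 t by norm_cast]
      rw [chi_mul_apply, chi_intCast_apply]
    set B : Fin n → ℤ := chi n (b1 t) (ee n) with hB
    -- Q-level identity (2)
    have hq2 : p * u ^ (n - 1) = (((2:ℤ)) : Q n) * (u ^ (s-1) * p * (1 + H)) := by
      push_cast
      linear_combination p * hsplit + u ^ (s-1) * p * hus + u ^ (s-1) * hp2
    -- 2 • (chi p B) = 2 • (chi (u^(s-1) p (1+H)) e - σ)
    have h2pb : (2:ℤ) • (chi n p B) = (2:ℤ) • (chi n (u^(s-1) * p * (1+H)) (ee n) - σ) := by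
      calc (2:ℤ) • (chi n p B) = chi n p ((2:ℤ) • B) := (map_smul _ _ _).symm
      _ = chi n p (chi n (u^(n-1)) (ee n) - σ) := by
          rw [show (2:ℤ) • B = chi n (u^(n-1)) (ee n) - σ by rw [hbase]; abel]
      _ = chi n p (chi n (u^(n-1)) (ee n)) - chi n p σ := map_sub _ _ _
      _ = chi n (p * u^(n-1)) (ee n) - (2:ℤ) • σ := by rw [← chi_mul_apply, hσ, chi_p_sig]
      _ = (2:ℤ) • (chi n (u^(s-1) * p * (1+H)) (ee n)) - (2:ℤ) • σ := by
          rw [hq2, chi_mul_apply, chi_intCast_apply]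
      _ = (2:ℤ) • (chi n (u^(s-1) * p * (1+H)) (ee n) - σ) := (smul_sub _ _ _).symm
    have hpb := cancel2 n _ _ h2pb
    -- Q-level identity (4)
    have hq4 : u^(s-1) * p * (1+H)
        = u^(n-1) + H * u^(n-1) - (((2:ℤ)) : Q n) * (H * (u^(s-1) * (1 + H))) := by
      push_cast
      linear_combination (-(1 + H)) * hsplit + (-(1 + H) * u^(s-1)) * hus
    set W : Fin n → ℤ := chi n (H * (u ^ (s-1) * (1 + H))) (ee n) with hW
    have hHapp : chi n (H * u ^ (n-1)) (ee n)
        = ((2 ^ (s - 1) - 1 : ℕ) : ℤ) • σ + (2:ℤ) • chi n H B := by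
      rw [chi_mul_apply, hbase, map_add, map_smul, hchiH]
    have hval : chi n (u ^ (s-1) * p * (1 + H)) (ee n)
        = (σ + (2:ℤ) • B) + (((2 ^ (s - 1) - 1 : ℕ) : ℤ) • σ + (2:ℤ) • chi n H B)
          - (2:ℤ) • W := by
      rw [hq4, map_sub, map_add, LinearMap.sub_apply, LinearMap.add_apply, hbase, hHapp,
        chi_mul_apply, chi_intCast_apply]
    refine ⟨B, ((2:ℤ) ^ (s-2) - 1) • σ + B + chi n H B - W, by simpa using hbase, ?_⟩
    rw [hpb, hval, hc1]
    have hd : ((2 ^ (s - 2) - 1 : ℕ) : ℤ) = (2:ℤ) ^ (s-2) - 1 := by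
      have e1 : (1:ℕ) ≤ 2 ^ (s - 2) := Nat.one_le_two_pow
      push_cast [Nat.cast_sub e1]
      ring
    rw [hd]
    module
  | succ l hl ih =>
    obtain ⟨B, C, hA, hPB⟩ := ih
    have hexp : (l+1+1) * s - 1 = s + ((l+1) * s - 1) := by
      have h1 : 0 < (l+1) * s := by positivity
      have h2 : (l+1+1) * s = s + (l+1) * s := by ring
      omega
    rw [hexp, pow_add]
    have husB : chi n (u ^ s) B = σ + (2:ℤ) • C + (2:ℤ) • chi n H B := by
      rw [hus, show (p + 2 * H : Q n) = p + ((2:ℤ) : Q n) * H by push_cast; ring,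
        map_add, LinearMap.add_apply, hPB, chi_mul_apply, chi_intCast_apply]
    have hstep : chi n (u ^ s * u ^ ((l+1) * s - 1)) (ee n)
        = (2:ℤ)^(l-1) • ((2:ℤ)^s • σ) + (2:ℤ)^l • (σ + (2:ℤ) • C + (2:ℤ) • chi n H B) := by
      rw [chi_mul_apply, hA, map_add, map_smul, map_smul, husB, hσ, chi_u_pow_sig]
    have h2l : (2:ℤ)^l = 2 * (2:ℤ)^(l-1) := by
      conv_lhs => rw [← Nat.sub_add_cancel hl]
      rw [pow_succ]
      ring
    have h2l1 : (2:ℤ)^(l+1) = 4 * (2:ℤ)^(l-1) := by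
      have h : l + 1 = (l - 1) + 2 := by omega
      rw [h, pow_add]
      ring
    have h2s : (2:ℤ)^s = 4 * (2:ℤ)^(s-2) := by
      conv_lhs => rw [← Nat.sub_add_cancel hs2]
      rw [pow_add]
      ring
    -- chi p C = 2 • C
    have hPC : chi n p C = (2:ℤ) • C := by
      apply cancel2
      have e1 : chi n (p * p) B = chi n (((2:ℤ) : Q n) * p) B := by
        rw [show p * p = p ^ 2 by ring, hp2]
        norm_cast
      rw [chi_mul_apply, hPB, map_add, map_smul, chi_mul_apply, chi_intCast_apply, hPB,
        hσ, chi_p_sig] at e1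
      rw [← hσ] at e1
      -- e1 : 2•σ + 2•(chi p C) = 2•(σ + 2•C)
      calc (2:ℤ) • chi n p C = ((2:ℤ) • σ + (2:ℤ) • chi n p C) - (2:ℤ) • σ := by abel
      _ = (2:ℤ) • (σ + (2:ℤ) • C) - (2:ℤ) • σ := by rw [e1]
      _ = (2:ℤ) • ((2:ℤ) • C) := by rw [smul_add]; abel
    have hpHB : chi n p (chi n H B) = ((2 ^ (s - 1) - 1 : ℕ) : ℤ) • σ + (2:ℤ) • chi n H C := by
      rw [← chi_mul_apply, show p * H = H * p by ring, chi_mul_apply, hPB, map_add, map_smul,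
        hchiH]
    refine ⟨(2:ℤ)^(s-2) • σ + C + chi n H B,
      (2 * (2:ℤ)^(s-2) - 1) • σ + C + chi n H C, ?_, ?_⟩
    · rw [hstep, show l + 1 - 1 = l by omega, h2l, h2l1, h2s]
      module
    · rw [map_add, map_add, map_smul, hσ, chi_p_sig, ← hσ, hPC, hpHB, hc1, hd_aux t ht]
      module

lemma chi_u_eq (n : ℕ) : chi n (1 + xq n) = 1 + T n := by
  rw [RingHom.map_add, RingHom.map_one, chi_xq]

lemma main_odd : ∀ l, 1 ≤ l →
    chi 2 ((1 + xq 2) ^ l) (ee 2) = (2:ℤ) ^ (l-1) • sig 2 := by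
  have hue : chi 2 (1 + xq 2) (ee 2) = sig 2 := by
    rw [chi_u_eq]
    funext i
    have : ((1 : Module.End ℤ (Fin 2 → ℤ)) + T 2) (ee 2) i = ee 2 i + (T 2) (ee 2) i := rfl
    rw [this, T_apply]
    fin_cases i <;> simp [ee, sig]
  intro l hl
  induction l, hl using Nat.le_induction with
  | base => simpa using hue
  | succ l hl ih =>
    rw [show l + 1 - 1 = l by omega]
    have hpow : ((1 + xq 2) ^ (l+1) : Q 2) = (1 + xq 2) ^ l * (1 + xq 2) := pow_succ _ _
    rw [hpow, chi_mul_apply, hue, chi_u_pow_sig]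

lemma main_int (k l : ℕ) (hk : 1 ≤ k) (hl : 1 ≤ l) :
    ∃ B : Fin (2 ^ k) → ℤ,
      chi (2 ^ k) ((1 + xq (2 ^ k)) ^ ((l+1) * 2 ^ (k-1) - 1)) (ee (2 ^ k))
        = (2:ℤ) ^ (l-1) • sig (2 ^ k) + (2:ℤ) ^ l • B := by
  obtain ⟨t, rfl⟩ : ∃ t, k = t + 1 := ⟨k - 1, by omega⟩
  rcases Nat.eq_zero_or_pos t with h0 | hpos
  · subst h0
    refine ⟨0, ?_⟩
    rw [show (l+1) * 2 ^ (0+1-1) - 1 = l by omega]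
    rw [show (2:ℕ) ^ (0+1) = 2 by norm_num]
    rw [main_odd l hl]
    simp
  · obtain ⟨B, C, hA, _⟩ := main_even t hpos l hl
    rw [show t + 1 - 1 = t by omega]
    exact ⟨B, hA⟩

lemma bridge (n m : ℕ) (D : (Fin n → ZMod m) → (Fin n → ZMod m))
    (hD : ∀ y : Fin n → ZMod m, D y = fun i => y i + y ⟨((i:ℕ) + 1) % n, Nat.mod_lt _ i.pos⟩)
    (j : ℕ) (x : Fin n → ℤ) :
    D^[j] (fun i => ((x i : ℤ) : ZMod m))
      = fun i => ((chi n ((1 + xq n) ^ j) x i : ℤ) : ZMod m) := by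
  induction j generalizing x with
  | zero => simp
  | succ j ih =>
    rw [Function.iterate_succ_apply]
    have hone : D (fun i => ((x i : ℤ) : ZMod m))
        = fun i => (((chi n (1 + xq n) x) i : ℤ) : ZMod m) := by
      rw [hD, chi_u_eq]
      funext i
      have : ((1 : Module.End ℤ (Fin n → ℤ)) + T n) x i = x i + (T n) x i := rfl
      rw [this, T_apply]
      push_cast
      rfl
    rw [hone, ih (chi n (1 + xq n) x), ← chi_mul_apply, ← pow_succ]

end DucciAux

/-- For `n = 2^k`, `m = 2^l`, the basic Ducci sequence (starting at `(0,…,0,1)`)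
has not vanished after `(l+1)·2^(k-1) - 1` steps, so `L_{2^l}(2^k) = (l+1)·2^(k-1)`. -/
theorem ducci_basic_length (k l : ℕ) (hk : 1 ≤ k) (hl : 1 ≤ l) :
    (ducci (2 ^ k) (2 ^ l))^[(l + 1) * 2 ^ (k - 1) - 1]
      (fun i : Fin (2 ^ k) => if (i : ℕ) = 2 ^ k - 1 then (1 : ZMod (2 ^ l)) else 0) ≠ 0 := by
  have hn : 0 < 2 ^ k := by positivity
  haveI : NeZero (2 ^ l) := ⟨by positivity⟩
  have hstart : (fun i : Fin (2 ^ k) => if (i : ℕ) = 2 ^ k - 1 then (1 : ZMod (2 ^ l)) else 0)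
      = fun i => (((DucciAux.ee (2 ^ k)) i : ℤ) : ZMod (2 ^ l)) := by
    funext i
    unfold DucciAux.ee
    split_ifs <;> simp
  rw [hstart]
  obtain ⟨B, hB⟩ := DucciAux.main_int k l hk hl
  rw [DucciAux.bridge (2 ^ k) (2 ^ l) (ducci (2 ^ k) (2 ^ l)) (fun y => rfl)
    ((l + 1) * 2 ^ (k - 1) - 1) (DucciAux.ee (2 ^ k)), hB]
  intro hcontra
  have h0 := congrFun hcontra ⟨0, hn⟩
  simp only [Pi.add_apply, Pi.smul_apply, DucciAux.sig, smul_eq_mul, mul_one, Pi.zero_apply,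
    Int.cast_add, Int.cast_mul, Int.cast_pow, Int.cast_ofNat] at h0
  have hz : ((2 : ZMod (2 ^ l))) ^ l = 0 := by
    have h2 : ((2 ^ l : ℕ) : ZMod (2 ^ l)) = 0 := ZMod.natCast_self _
    push_cast at h2
    exact h2
  rw [hz, zero_mul, add_zero] at h0
  have h1 : ((2 ^ (l - 1) : ℕ) : ZMod (2 ^ l)) = 0 := by
    push_cast
    exact h0
  rw [ZMod.natCast_eq_zero_iff] at h1
  have h2 := Nat.le_of_dvd (by positivity) h1
  have h3 : (2:ℕ) ^ (l - 1) < 2 ^ l := Nat.pow_lt_pow_right (by norm_num) (by omega)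
  omega
end

section
/- Let k, l ≥ 1 be integers, n = 2^k and m = 2^l. If v ∈ (ZMod m)^n satisfies D^β(v) = v for some integer β ≥ 1, then v = (0, 0, …, 0); that is, K(ℤ_{2^l}^{2^k}) is the trivial subgroup. -/
/-!
Write `D = 1 + S` with `S` the cyclic shift of `(ZMod 2^l)^(2^k)`, so `S^(2^k) = 1`. Modulo `2`
the binomial theorem gives `(1 + S)^(2^k) = 1 + S^(2^k) = 2`, hence `D^(2^k) = 2 * U` with `U`
commuting with `2`; as `2^l = 0`, `D` is nilpotent, and a nilpotent map has no periodic point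
other than `0`.
-/

theorem Function.IsPeriodicPt.eq_of_iterate_eq_const {α : Type*} {f : α → α} {N β : ℕ} {c v : α}
    (hN : ∀ x, f^[N] x = c) (hv : Function.IsPeriodicPt f β v) (hβ : 0 < β) : v = c := by
  have hsplit : β * N = N + (β * N - N) := by
    have : N ≤ β * N := Nat.le_mul_of_pos_left N hβ
    omega
  calc v = f^[β * N] v := (hv.mul_const N).eq.symm
    _ = c := by rw [hsplit, Function.iterate_add_apply, hN]

theorem Module.End.eq_zero_of_isNilpotent_of_isPeriodicPt {R M : Type*} [Semiring R]
    [AddCommMonoid M] [Module R M] {f : Module.End R M} (hf : IsNilpotent f) {β : ℕ} {v : M}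
    (hv : Function.IsPeriodicPt f β v) (hβ : 0 < β) : v = 0 := by
  obtain ⟨N, hN⟩ := hf
  refine hv.eq_of_iterate_eq_const (N := N) (fun x => ?_) hβ
  rw [← Module.End.coe_pow, hN, LinearMap.zero_apply]

theorem one_add_pow_two_pow {R : Type*} [CommRing R] (a : R) (k : ℕ) :
    ∃ t : R, (1 + a) ^ 2 ^ k = 1 + a ^ 2 ^ k + 2 * t := by
  induction k with
  | zero => exact ⟨0, by ring⟩
  | succ k ih =>
    obtain ⟨t, ht⟩ := ih
    refine ⟨a ^ 2 ^ k + 2 * t + 2 * t * a ^ 2 ^ k + 2 * t ^ 2, ?_⟩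
    rw [pow_succ, pow_mul, ht]
    ring

open Polynomial in
theorem isNilpotent_one_add_of_pow_two_pow_eq_one {A : Type*} [Ring A]
    (h2 : IsNilpotent (2 : A)) {a : A} {k : ℕ} (ha : a ^ 2 ^ k = 1) : IsNilpotent (1 + a) := by
  obtain ⟨t, ht⟩ := one_add_pow_two_pow (X : ℤ[X]) k
  have hpow : (1 + a) ^ 2 ^ k = 2 * (1 + aeval a t) := by
    have := congrArg (aeval a) ht
    simp only [map_pow, map_add, map_one, map_mul, map_ofNat, aeval_X, ha] at this
    rw [this]
    noncomm_ring
  refine IsNilpotent.of_pow (m := 2 ^ k) ?_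
  rw [hpow]
  exact (Nat.cast_commute 2 _).isNilpotent_mul_right h2

section CyclicShift

open Fin.NatCast

variable (R : Type*) [Semiring R] (n : ℕ) [NeZero n]

def cyclicShift : Module.End R (Fin n → R) :=
  LinearMap.funLeft R R (· + 1)

theorem cyclicShift_pow_apply (r : ℕ) (x : Fin n → R) (i : Fin n) :
    (cyclicShift R n ^ r) x i = x (i + r) := by
  induction r generalizing x with
  | zero => simp
  | succ r ih =>
    rw [pow_succ, Module.End.mul_apply, ih, cyclicShift, LinearMap.funLeft_apply,
      Nat.cast_succ, add_assoc]

theorem cyclicShift_pow_self : cyclicShift R n ^ n = 1 := by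
  ext x i
  simp [cyclicShift_pow_apply]

end CyclicShift

theorem ducci_eq_one_add_cyclicShift (n m : ℕ) [NeZero n] :
    ducci n m = ⇑(1 + cyclicShift (ZMod m) n) := by
  funext x i
  have hsucc : (⟨(i.val + 1) % n, Nat.mod_lt _ i.pos⟩ : Fin n) = i + 1 := by
    ext
    simp [Fin.val_add, Nat.add_mod]
  simp [ducci, cyclicShift, hsucc]

theorem ZMod.isNilpotent_natCast_pow (p l : ℕ) : IsNilpotent (p : ZMod (p ^ l)) :=
  ⟨l, by rw [← Nat.cast_pow, ZMod.natCast_self]⟩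

theorem ducci_cycle_trivial_general (k l : ℕ)
    (v : Fin (2 ^ k) → ZMod (2 ^ l))
    (h : ∃ β : ℕ, 1 ≤ β ∧ (ducci (2 ^ k) (2 ^ l))^[β] v = v) :
    v = 0 := by
  obtain ⟨β, hβ, hv⟩ := h
  have h2 : IsNilpotent (2 : Module.End (ZMod (2 ^ l)) (Fin (2 ^ k) → ZMod (2 ^ l))) := by
    simpa only [Nat.cast_ofNat, map_ofNat] using (ZMod.isNilpotent_natCast_pow 2 l).map
      (algebraMap (ZMod (2 ^ l)) (Module.End (ZMod (2 ^ l)) (Fin (2 ^ k) → ZMod (2 ^ l))))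
  have hD := isNilpotent_one_add_of_pow_two_pow_eq_one h2 (cyclicShift_pow_self _ _)
  rw [ducci_eq_one_add_cyclicShift] at hv
  exact Module.End.eq_zero_of_isNilpotent_of_isPeriodicPt hD hv hβ

/-- For `n = 2^k`, `m = 2^l`, the only tuple in a Ducci cycle is `(0,…,0)`:
`K(ℤ_{2^l}^{2^k})` is trivial. -/
theorem ducci_cycle_trivial (k l : ℕ) (hk : 1 ≤ k) (hl : 1 ≤ l)
    (v : Fin (2 ^ k) → ZMod (2 ^ l))
    (h : ∃ β : ℕ, 1 ≤ β ∧ (ducci (2 ^ k) (2 ^ l))^[β] v = v) :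
    v = 0 :=
  ducci_cycle_trivial_general k l v h
end

section
/- Let n be even and m ≥ 1. If a tuple u ∈ (ZMod m)^n has at least one predecessor, then the set { y ∈ (ZMod m)^n : D(y) = u } has cardinality exactly m. -/
/-- For even `n`, any tuple with at least one predecessor has exactly `m` predecessors. -/
theorem ducci_card_predecessors (n m : ℕ) (hn : Even n) (hn1 : 1 ≤ n) (hm : 1 ≤ m)
    (u : Fin n → ZMod m) (h : ∃ y, ducci n m y = u) :
    {y : Fin n → ZMod m | ducci n m y = u}.ncard = m := by
  obtain ⟨y, hy⟩ := h
  obtain ⟨t, ht⟩ := hn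
  have h2 : 2 ∣ n := ⟨t, by omega⟩
  have hsign : ∀ k : ℕ, ((-1 : ZMod m)) ^ ((k + 1) % n) = -((-1 : ZMod m) ^ k) := by
    intro k
    have hmod : (k + 1) % n % 2 = (k + 1) % 2 := Nat.mod_mod_of_dvd _ h2
    rcases Nat.even_or_odd k with hk | hk
    · have h1 : Odd ((k + 1) % n) := by
        rw [Nat.odd_iff, hmod, ← Nat.odd_iff]
        exact hk.add_one
      rw [h1.neg_one_pow, hk.neg_one_pow]
    · have h1 : Even ((k + 1) % n) := by
        rw [Nat.even_iff, hmod, ← Nat.even_iff]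
        exact hk.add_one
      rw [h1.neg_one_pow, hk.neg_one_pow, neg_neg]
  set f : ZMod m → (Fin n → ZMod m) := fun c i => y i + (-1 : ZMod m) ^ (i : ℕ) * c with hf
  have finj : Function.Injective f := by
    intro a b hab
    have := congrFun hab ⟨0, hn1⟩
    simpa [hf] using this
  have key : {z : Fin n → ZMod m | ducci n m z = u} = Set.range f := by
    ext z
    simp only [Set.mem_setOf_eq, Set.mem_range]
    constructor
    · intro hz
      refine ⟨z ⟨0, hn1⟩ - y ⟨0, hn1⟩, ?_⟩
      have rel : ∀ i : Fin n,
          z ⟨(i.val + 1) % n, Nat.mod_lt _ i.pos⟩ - y ⟨(i.val + 1) % n, Nat.mod_lt _ i.pos⟩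
            = -(z i - y i) := by
        intro i
        have h1 := congrFun hz i
        have h3 := congrFun hy i
        simp only [ducci] at h1 h3
        linear_combination h1 - h3
      have claim : ∀ k : ℕ, ∀ hk : k < n,
          z ⟨k, hk⟩ = y ⟨k, hk⟩ + (-1 : ZMod m) ^ k * (z ⟨0, hn1⟩ - y ⟨0, hn1⟩) := by
        intro k
        induction k with
        | zero => intro hk; simp
        | succ k ih =>
          intro hk
          have hkn : k < n := by omega
          have h1 := rel ⟨k, hkn⟩
          have hkk : (k + 1) % n = k + 1 := Nat.mod_eq_of_lt hk
          simp only [hkk] at h1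
          rw [ih hkn] at h1
          have : z ⟨k + 1, hk⟩ - y ⟨k + 1, hk⟩ = (-1 : ZMod m) ^ (k + 1) * (z ⟨0, hn1⟩ - y ⟨0, hn1⟩) := by
            rw [h1]; ring
          linear_combination this
      funext i
      have := claim i.val i.isLt
      simp only [hf]
      rw [show (⟨i.val, i.isLt⟩ : Fin n) = i from rfl] at this
      rw [this]
    · rintro ⟨c, rfl⟩
      funext i
      have h3 := congrFun hy i
      simp only [ducci, hf] at h3 ⊢
      rw [← h3, hsign i.val]
      ring
  rw [key, ← Nat.card_coe_set_eq, Nat.card_range_of_injective finj, Nat.card_zmod]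
end

section
/- For integers r ≥ 0, t ≥ 1, n ≥ 1 and any s, the Ducci coefficients satisfy the convolution identity a_{r+t,s} = Σ_{i=1}^{n} a_{t,i} · a_{r, s−i+1}, where the second index of each coefficient is read modulo n. -/
/-- The Ducci coefficients `a_{r,s}`, with second index read modulo `n`:
`a_{0,1} = 1`, `a_{0,s} = 0` for `s ≠ 1`, and `a_{r,s} = a_{r-1,s} + a_{r-1,s-1}`. -/
def ducciCoeff (n : ℕ) : ℕ → ZMod n → ℕ
  | 0, s => if s = 1 then 1 else 0
  | r + 1, s => ducciCoeff n r s + ducciCoeff n r (s - 1)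

/-!
Induction on `t`. For `t = 0` the sum collapses to its term at `i = 1`. In the inductive step,
`a_{r+t+1,s} = a_{r+t,s} + a_{r+t,s-1}`; expanding both terms by the induction hypothesis and
shifting the summation index of the second by one turns it into the convolution with
`a_{t+1,i} = a_{t,i} + a_{t,i-1}`. Finally, `i ↦ i mod n` maps `{1, …, n}` bijectively onto `ZMod n`.
-/

open Finset

namespace ZMod

variable {M : Type*} [AddCommMonoid M] (n : ℕ) [NeZero n]

theorem sum_range_natCast (f : ZMod n → M) : ∑ i ∈ range n, f i = ∑ j, f j :=
  sum_nbij' (fun i => (i : ZMod n)) val (fun _ _ => mem_univ _)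
    (fun j _ => mem_range.2 (val_lt j))
    (fun _ hi => val_cast_of_lt (mem_range.1 hi)) (fun j _ => natCast_zmod_val j)
    (fun _ _ => rfl)

theorem sum_Icc_one_natCast (f : ZMod n → M) : ∑ i ∈ Icc 1 n, f i = ∑ j, f j := by
  calc ∑ i ∈ Icc 1 n, f i
      = ∑ i ∈ range n, f (i + 1) := by
        rw [← Ico_add_one_right_eq_Icc, sum_Ico_eq_sum_range]
        simp only [add_tsub_cancel_right, Nat.cast_add, Nat.cast_one, add_comm]
    _ = ∑ j, f (j + 1) := sum_range_natCast n (fun j => f (j + 1))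
    _ = ∑ j, f j := Equiv.sum_comp (Equiv.addRight 1) f

end ZMod

theorem ducciCoeff_zero (n : ℕ) (s : ZMod n) : ducciCoeff n 0 s = if s = 1 then 1 else 0 := rfl

theorem ducciCoeff_succ (n r : ℕ) (s : ZMod n) :
    ducciCoeff n (r + 1) s = ducciCoeff n r s + ducciCoeff n r (s - 1) := rfl

theorem ducciCoeff_add (n : ℕ) [NeZero n] (r t : ℕ) (s : ZMod n) :
    ducciCoeff n (r + t) s = ∑ j, ducciCoeff n t j * ducciCoeff n r (s - j + 1) := by
  induction t generalizing s with
  | zero => simp [ducciCoeff_zero]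
  | succ t ih =>
    have shift : ∑ j, ducciCoeff n t (j - 1) * ducciCoeff n r (s - j + 1) =
        ∑ j, ducciCoeff n t j * ducciCoeff n r (s - 1 - j + 1) := by
      rw [← Equiv.sum_comp (Equiv.addRight 1)]
      simp only [Equiv.coe_addRight, add_sub_cancel_right, sub_add_eq_sub_sub_swap]
    rw [← add_assoc, ducciCoeff_succ, ih, ih]
    simp only [ducciCoeff_succ, add_mul, sum_add_distrib, shift]

theorem ducciCoeff_convolution_general (n : ℕ) (hn : 1 ≤ n) (r t : ℕ) (s : ZMod n) :
    ducciCoeff n (r + t) s =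
      ∑ i ∈ Finset.Icc 1 n,
        ducciCoeff n t (i : ZMod n) * ducciCoeff n r (s - (i : ZMod n) + 1) := by
  have : NeZero n := ⟨by omega⟩
  rw [ZMod.sum_Icc_one_natCast n fun j => ducciCoeff n t j * ducciCoeff n r (s - j + 1)]
  exact ducciCoeff_add n r t s

/-- Convolution identity: `a_{r+t,s} = Σ_{i=1}^{n} a_{t,i} · a_{r, s-i+1}`. -/
theorem ducciCoeff_convolution (n : ℕ) (hn : 1 ≤ n) (r t : ℕ) (ht : 1 ≤ t) (s : ZMod n) :
    ducciCoeff n (r + t) s =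
      ∑ i ∈ Finset.Icc 1 n,
        ducciCoeff n t (i : ZMod n) * ducciCoeff n r (s - (i : ZMod n) + 1) :=
  ducciCoeff_convolution_general n hn r t s
end

section
/- For an integer n ≥ 1, the Ducci coefficients at step r = n satisfy a_{n,1} = 2 and a_{n,s} = C(n, s−1) for 2 ≤ s ≤ n. -/
theorem ducci_key (n : ℕ) (r : ℕ) : ∀ s : ZMod n,
    ducciCoeff n r s = ∑ k ∈ Finset.range (r+1), if ((k : ZMod n) = s - 1) then r.choose k else 0 := by
  induction r with
  | zero =>
    intro s
    rw [show (0:ℕ)+1 = 1 from rfl, Finset.sum_range_one]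
    show (if s = 1 then 1 else 0) = if ((0:ℕ):ZMod n) = s - 1 then Nat.choose 0 0 else 0
    simp only [Nat.cast_zero, Nat.choose_zero_right]
    by_cases h : s = 1
    · simp [h]
    · rw [if_neg h, if_neg (fun hh => h (by rw [← sub_eq_zero]; exact hh.symm))]
  | succ r ih =>
    intro s
    show ducciCoeff n r s + ducciCoeff n r (s - 1) = _
    rw [ih s, ih (s - 1)]
    rw [Finset.sum_range_succ' (fun k => if ((k:ZMod n) = s - 1) then (r+1).choose k else 0)]
    have h1 : ∀ k : ℕ, (if (((k+1 : ℕ):ZMod n) = s - 1) then (r+1).choose (k+1) else 0)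
        = (if ((k:ZMod n) = (s-1) - 1) then r.choose k else 0)
          + (if ((((k+1:ℕ)):ZMod n) = s - 1) then r.choose (k+1) else 0) := by
      intro k
      have hc : ((((k+1 : ℕ)):ZMod n) = s - 1) ↔ ((k:ZMod n) = (s-1) - 1) := by
        push_cast
        constructor <;> intro h <;> linear_combination h
      rw [Nat.choose_succ_succ]
      by_cases h : (((k+1 : ℕ):ZMod n) = s - 1)
      · rw [if_pos h, if_pos (hc.mp h), if_pos h]
      · rw [if_neg h, if_neg (fun hh => h (hc.mpr hh)), if_neg h]
    simp only [h1]
    rw [Finset.sum_add_distrib]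
    have h2 : (∑ k ∈ Finset.range (r+1), if (((k+1:ℕ):ZMod n) = s - 1) then r.choose (k+1) else 0)
        + (if (((0:ℕ):ZMod n) = s - 1) then (r+1).choose 0 else 0)
        = ∑ k ∈ Finset.range (r+1), if ((k:ZMod n) = s - 1) then r.choose k else 0 := by
      rw [show (r+1).choose 0 = r.choose 0 by simp,
        ← Finset.sum_range_succ' (fun k => if ((k:ZMod n) = s - 1) then r.choose k else 0),
        Finset.sum_range_succ]
      simp [Nat.choose_succ_self]
    omega


/-- At step `r = n`: `a_{n,1} = 2` and `a_{n,s} = C(n, s-1)` for `2 ≤ s ≤ n`. -/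
theorem ducciCoeff_at_n (n : ℕ) (hn : 1 ≤ n) :
    ducciCoeff n n (1 : ZMod n) = 2 ∧
      ∀ s : ℕ, 2 ≤ s → s ≤ n → ducciCoeff n n (s : ZMod n) = Nat.choose n (s - 1) := by
  have : NeZero n := ⟨by omega⟩
  constructor
  · rw [ducci_key, show (1 : ZMod n) - 1 = 0 by ring, Finset.sum_range_succ,
      if_pos (ZMod.natCast_self n), Nat.choose_self]
    have h0 : (∑ k ∈ Finset.range n, if ((k:ZMod n) = 0) then n.choose k else 0) = 1 := by
      rw [Finset.sum_eq_single 0]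
      · simp
      · intro k hk hk0
        rw [if_neg]
        intro h
        have hd := (ZMod.natCast_eq_zero_iff k n).mp h
        exact hk0 (Nat.eq_zero_of_dvd_of_lt hd (Finset.mem_range.mp hk))
      · intro h; exact absurd (Finset.mem_range.mpr (by omega)) h
    rw [h0]
  · intro s hs2 hsn
    rw [ducci_key]
    have hcast : ((s:ℕ) : ZMod n) - 1 = ((s-1 : ℕ) : ZMod n) := by
      rw [show (s:ℕ) = (s-1) + 1 by omega]
      push_cast
      ring
    rw [hcast, Finset.sum_eq_single (s-1)]
    · rw [if_pos rfl]
    · intro k hk hks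
      rw [if_neg]
      intro h
      rw [ZMod.natCast_eq_natCast_iff'] at h
      have hk' := Finset.mem_range.mp hk
      have h1 : (s-1) % n = s-1 := Nat.mod_eq_of_lt (by omega)
      rcases Nat.lt_or_ge k n with hlt | hge
      · rw [Nat.mod_eq_of_lt hlt, h1] at h; exact hks h
      · have hkn : k = n := by omega
        rw [hkn, Nat.mod_self, h1] at h
        omega
    · intro h; exact absurd (Finset.mem_range.mpr (by omega)) h
end

section
/- For every integer r ≥ 0 and every s, the Ducci coefficients satisfy the symmetry a_{r,s} = a_{r, r−s+2}, where both second indices are read modulo n. -/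
/-- Symmetry of the Ducci coefficients: `a_{r,s} = a_{r, r-s+2}` (indices mod `n`). -/
theorem ducciCoeff_symm (n : ℕ) (hn : 1 ≤ n) (r : ℕ) (s : ZMod n) :
    ducciCoeff n r s = ducciCoeff n r ((r : ZMod n) - s + 2) := by
  induction r generalizing s with
  | zero =>
    simp only [ducciCoeff, Nat.cast_zero]
    congr 1
    rw [eq_iff_iff]
    constructor <;> intro h
    · rw [h]; ring
    · have : s = 0 - (0 - s + 2) + 2 := by ring
      rw [this, h]; ring
  | succ r ih =>
    simp only [ducciCoeff]
    rw [add_comm (ducciCoeff n r ((r+1 : ℕ) - s + 2))]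
    congr 1
    · rw [ih s]
      congr 1
      push_cast
      ring
    · rw [ih (s - 1)]
      congr 1
      push_cast
      ring
end

section
/- For every integer j ≥ 2 and every integer t with 0 < t < 2^j and t ≠ 2^{j−1}, the binomial coefficient satisfies C(2^j, t) ≡ 0 (mod 4). -/
/-! By Kummer's theorem `v₂ C(2^j, t) = j - v₂ t` for `0 < t ≤ 2^j`, and the only `t` in `(0, 2^j)`
divisible by `2^(j-1)` is `2^(j-1)` itself. -/

namespace Nat

theorem pow_sub_dvd_choose_prime_pow {p n k i : ℕ} (hp : p.Prime) (hkn : k ≤ p ^ n) (hk0 : k ≠ 0)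
    (hk : ¬p ^ (i + 1) ∣ k) : p ^ (n - i) ∣ (p ^ n).choose k := by
  rw [hp.pow_dvd_iff_le_factorization (choose_pos hkn).ne', factorization_choose_prime_pow hp hkn hk0]
  rw [hp.pow_dvd_iff_le_factorization hk0] at hk
  omega

end Nat

/-- For `j ≥ 2` and `0 < t < 2^j` with `t ≠ 2^(j-1)`, `C(2^j, t) ≡ 0 (mod 4)`. -/
theorem binom_two_pow_mod_four (j t : ℕ) (hj : 2 ≤ j) (ht0 : 0 < t) (ht1 : t < 2 ^ j)
    (ht2 : t ≠ 2 ^ (j - 1)) :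
    Nat.choose (2 ^ j) t ≡ 0 [MOD 4] := by
  have hj' : j - 2 + 1 = j - 1 := by omega
  have hndvd : ¬2 ^ (j - 2 + 1) ∣ t := fun h ↦ ht2 <| by
    rw [hj'] at h
    refine Nat.eq_of_dvd_of_lt_two_mul ht0.ne' h ?_
    rwa [← pow_succ', Nat.sub_add_cancel (by omega)]
  have h4 := Nat.pow_sub_dvd_choose_prime_pow Nat.prime_two ht1.le ht0.ne' hndvd
  rw [Nat.sub_sub_self hj] at h4
  exact Nat.modEq_zero_iff_dvd.2 h4
end

section
/- For every integer j ≥ 2, the central binomial coefficient satisfies C(2^j, 2^{j−1}) ≡ 6 (mod 8). -/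
/-!
Vandermonde's identity gives `C(2N, N) = ∑ₖ C(N, k)²`. For `N = 2^j`, Kummer's theorem says that
the `2`-adic valuation of `C(N, k)` is `j - v₂(k)`, so for `0 < k < N` it is at least `2` except at
`k = N/2`. Modulo `8` only the terms `k = 0, N/2, N` survive, giving
`C(2N, N) ≡ 2 + C(N, N/2)² (mod 8)`, and `2 + 6² ≡ 6` closes an induction starting at `C(4, 2) = 6`.
-/

open Finset

lemma four_dvd_choose_two_pow {j k : ℕ} (hk0 : k ≠ 0) (hk : k < 2 ^ j) (hkh : k ≠ 2 ^ (j - 1)) :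
    4 ∣ (2 ^ j).choose k := by
  have hj : j ≠ 0 := by rintro rfl; omega
  have hv : k.factorization 2 + 2 ≤ j := by
    by_contra! hv
    have hdvd : 2 ^ (j - 1) ∣ k := (Nat.prime_two.pow_dvd_iff_le_factorization hk0).2 (by omega)
    refine hkh (Nat.eq_of_dvd_of_lt_two_mul hk0 hdvd ?_)
    rwa [← pow_succ', Nat.sub_add_cancel (Nat.one_le_iff_ne_zero.2 hj)]
  have hchoose : (2 ^ j).choose k ≠ 0 := (Nat.choose_pos hk.le).ne'
  rw [show 4 = 2 ^ 2 by rfl, Nat.prime_two.pow_dvd_iff_le_factorization hchoose,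
    Nat.factorization_choose_prime_pow Nat.prime_two hk.le hk0]
  omega

lemma natCast_sq_eq_zero_of_four_dvd {n : ℕ} (hn : 4 ∣ n) : (n : ZMod 8) ^ 2 = 0 := by
  obtain ⟨m, rfl⟩ := hn
  have h8 : (8 : ZMod 8) = 0 := rfl
  push_cast
  linear_combination (2 * (m : ZMod 8) ^ 2) * h8

lemma choose_two_mul_self_eq_two_add_sq {N h : ℕ} (hh0 : h ≠ 0) (hhN : h < N)
    (hfour : ∀ k, k ≠ 0 → k < N → k ≠ h → 4 ∣ N.choose k) :
    ((2 * N).choose N : ZMod 8) = 2 + (N.choose h : ZMod 8) ^ 2 := by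
  have hsub : ({0, h, N} : Finset ℕ) ⊆ range (N + 1) := by
    simp only [insert_subset_iff, singleton_subset_iff, mem_range]
    omega
  rw [← Nat.sum_range_choose_sq, Nat.cast_sum, ← sum_subset hsub]
  · rw [sum_insert (by simp only [mem_insert, mem_singleton]; omega),
      sum_insert (by simp only [mem_singleton]; omega), sum_singleton]
    push_cast [Nat.choose_zero_right, Nat.choose_self]
    ring
  · intro k hk hk'
    simp only [mem_range, mem_insert, mem_singleton, not_or] at hk hk'
    rw [Nat.cast_pow]
    exact natCast_sq_eq_zero_of_four_dvd (hfour k hk'.1 (by omega) hk'.2.1)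

/-- For `j ≥ 2`, `C(2^j, 2^(j-1)) ≡ 6 (mod 8)`. -/
theorem central_binom_mod_eight (j : ℕ) (hj : 2 ≤ j) :
    Nat.choose (2 ^ j) (2 ^ (j - 1)) ≡ 6 [MOD 8] := by
  rw [← ZMod.natCast_eq_natCast_iff]
  induction j, hj using Nat.le_induction with
  | base => decide
  | succ j hj ih =>
    have hhalf : 2 ^ (j - 1) < 2 ^ j := Nat.pow_lt_pow_right (by norm_num) (by omega)
    rw [Nat.add_sub_cancel, pow_succ', choose_two_mul_self_eq_two_add_sq (by positivity) hhalf
      (fun _ ↦ four_dvd_choose_two_pow), ih]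
    decide
end

section
/- For every integer j ≥ 2, the binomial coefficient satisfies C(2^j − 1, 2^{j−1}) ≡ 3 (mod 4). -/
/-!
By Vandermonde, `C(2n, n) = ∑ᵢ C(n, i)²`, and `C(2^j - 1, 2^(j-1))` is half of this for
`n = 2^(j-1)`, so it suffices to show `C(2n, n) ≡ 6 (mod 8)`. For `n` a power of two every
`C(n, i)` with `0 < i < n` is even, and an even `x` satisfies `x² ≡ 2x (mod 8)`. Hence the sum of
squares is `2 ∑ᵢ C(n, i) - 2 = 2^(n+1) - 2 ≡ -2 (mod 8)` as soon as `n ≥ 2`.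
-/

namespace Nat

theorem choose_two_mul_self_eq_two_mul_choose {n : ℕ} (hn : 0 < n) :
    (2 * n).choose n = 2 * (2 * n - 1).choose n := by
  obtain ⟨k, rfl⟩ : ∃ k, n = k + 1 := ⟨n - 1, by omega⟩
  rw [show 2 * (k + 1) = 2 * k + 1 + 1 by ring, Nat.add_sub_cancel, choose_succ_succ,
    choose_symm_half]
  ring

theorem sq_cast_eq_two_mul_of_even {x : ℕ} (hx : Even x) : (x : ZMod 8) ^ 2 = 2 * x := by
  obtain ⟨a, rfl⟩ := hx
  push_cast
  generalize (a : ZMod 8) = b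
  revert b
  decide

theorem cast_choose_two_pow_sq (m i : ℕ) :
    ((2 ^ m).choose i : ZMod 8) ^ 2 + (if i = 0 then 1 else 0) + (if i = 2 ^ m then 1 else 0) =
      2 * (2 ^ m).choose i := by
  by_cases h0 : i = 0
  · subst h0
    norm_num [(Nat.two_pow_pos m).ne]
  by_cases hm : i = 2 ^ m
  · subst hm
    norm_num
  rw [if_neg h0, if_neg hm, add_zero, add_zero]
  exact sq_cast_eq_two_mul_of_even (even_iff_two_dvd.2 (prime_two.dvd_choose_pow h0 hm))

theorem cast_choose_two_mul_two_pow (m : ℕ) (hm : 1 ≤ m) :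
    ((2 * 2 ^ m).choose (2 ^ m) : ZMod 8) = 6 := by
  have hsum := Finset.sum_congr rfl fun i (_ : i ∈ Finset.range (2 ^ m + 1)) =>
    cast_choose_two_pow_sq m i
  simp only [Finset.sum_add_distrib, ← Finset.mul_sum, Finset.sum_ite_eq', Finset.mem_range,
    Nat.zero_lt_succ, Nat.lt_add_one, if_true, ← Nat.cast_sum, ← Nat.cast_pow,
    sum_range_choose_sq, sum_range_choose] at hsum
  have h8 : (8 : ZMod 8) = 0 := rfl
  obtain ⟨k, hk⟩ : ∃ k, 2 ^ m = k + 2 :=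
    ⟨2 ^ m - 2, by have := Nat.pow_le_pow_right two_pos hm; omega⟩
  rw [hk] at hsum ⊢
  push_cast at hsum
  linear_combination hsum + (2 ^ k - 1) * h8

end Nat

/-- For `j ≥ 2`, `C(2^j - 1, 2^(j-1)) ≡ 3 (mod 4)`. -/
theorem binom_two_pow_sub_one_mod_four (j : ℕ) (hj : 2 ≤ j) :
    Nat.choose (2 ^ j - 1) (2 ^ (j - 1)) ≡ 3 [MOD 4] := by
  obtain ⟨m, rfl⟩ : ∃ m, j = m + 1 := ⟨j - 1, by omega⟩
  have h := Nat.cast_choose_two_mul_two_pow m (by omega)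
  rw [Nat.choose_two_mul_self_eq_two_mul_choose (Nat.two_pow_pos m),
    show (6 : ZMod 8) = (6 : ℕ) from rfl, ZMod.natCast_eq_natCast_iff] at h
  rw [pow_succ', Nat.add_sub_cancel]
  unfold Nat.ModEq at h ⊢
  omega
end

section
/- Let k ≥ 2 and l ≥ 3 be integers and n = 2^k. Then the Ducci coefficients satisfy a_{(l−1)·2^{k−1}, l·2^{k−2}+1} + a_{(l−1)·2^{k−1}, l·2^{k−2}−2^{k−1}+1} ≡ 0 (mod 2^l), where second indices are read modulo n. -/
/-!
In the group ring `R[ℤ/n]` with generator `X = single 1 1`, the coefficient of `X^s` in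
`(1 + X)^r` is `a_{r,s+1}`. For `n = 2^k` put `v = X^(2^(k-2))`; then `v⁴ = 1` and
`(1 + X)^(2^(k-2)) = 1 + v + 2w`. Because `(1 + v²)(1 + v)² = 2(1 + v²)(1 + v)` when `v⁴ = 1`,
each factor `1 + v + 2w` contributes a factor `2`, so `(1 + v²)(1 + X)^((l-1)·2^(k-1))` is
divisible by `2^(2l-3)`. Its coefficient at `X^(l·2^(k-2))` is the sum in question.
-/

open AddMonoidAlgebra

section

variable {R : Type*}

theorem coeff_one_add_single_one_pow [Semiring R] (n r : ℕ) (s : ZMod n) :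
    ((1 + single 1 1 : R[ZMod n]) ^ r).coeff s = ducciCoeff n r (s + 1) := by
  induction r generalizing s with
  | zero =>
    simp only [pow_zero, one_def, coeff_single, Finsupp.single_apply, ducciCoeff, add_eq_right,
      eq_comm (a := (0 : ZMod n))]
    split_ifs <;> simp
  | succ r ih =>
    rw [pow_succ, mul_add, mul_one, coeff_add, Finsupp.add_apply, coeff_mul_single_apply, mul_one,
      ih, ih, ducciCoeff, add_sub_cancel_right, neg_add_cancel_right, Nat.cast_add]

theorem coeff_one_add_single_mul {G : Type*} [Semiring R] [AddCommGroup G] (F : R[G]) (g c : G) :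
    ((1 + single g 1) * F).coeff c = F.coeff c + F.coeff (c - g) := by
  rw [add_mul, one_mul, coeff_add, Finsupp.add_apply, coeff_single_mul_apply, one_mul,
    neg_add_eq_sub]

theorem single_one_one_pow_self [Semiring R] (n : ℕ) : (single 1 1 : R[ZMod n]) ^ n = 1 := by
  rw [single_pow, nsmul_one, ZMod.natCast_self, one_pow, one_def]

theorem natCast_eq_zero_of_zmodAlgebra [Semiring R] (n : ℕ) [Algebra (ZMod n) R] :
    (n : R) = 0 := by
  rw [← map_natCast (algebraMap (ZMod n) R), ZMod.natCast_self, map_zero]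

theorem exists_one_add_pow_two_pow_eq [CommRing R] (x : R) (j : ℕ) :
    ∃ w, (1 + x) ^ 2 ^ j = 1 + x ^ 2 ^ j + 2 * w := by
  induction j with
  | zero => exact ⟨0, by simp⟩
  | succ j ih =>
    obtain ⟨w, hw⟩ := ih
    exact ⟨x ^ 2 ^ j + 2 * w + 2 * x ^ 2 ^ j * w + 2 * w ^ 2, by rw [pow_succ, pow_mul, hw]; ring⟩

theorem two_pow_dvd_one_add_sq_mul_pow [CommRing R] {v : R} (hv : v ^ 4 = 1) (w : R) (N : ℕ) :
    2 ^ N ∣ (1 + v ^ 2) * (1 + v + 2 * w) ^ (N + 1) := by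
  -- multiplication by `1 + v + 2w` maps the ideal `((1 + v²)(1 + v), 2(1 + v²))` into twice itself
  suffices ∃ f g, (1 + v ^ 2) * (1 + v + 2 * w) ^ (N + 1) =
      2 ^ N * ((1 + v ^ 2) * (1 + v) * f + 2 * (1 + v ^ 2) * g) from
    this.elim fun _ h ↦ h.elim fun _ h ↦ ⟨_, h⟩
  induction N with
  | zero => exact ⟨1, w, by ring⟩
  | succ N ih =>
    obtain ⟨f, g, h⟩ := ih
    refine ⟨f * (1 + w) + g, w * g, ?_⟩
    rw [pow_succ (1 + v + 2 * w), ← mul_assoc, h]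
    linear_combination 2 ^ N * f * hv

theorem two_pow_dvd_one_add_pow_mul_one_add_pow [CommRing R] {x : R} {j : ℕ}
    (hx : x ^ 2 ^ (j + 2) = 1) (m : ℕ) :
    2 ^ (2 * m + 3) ∣ (1 + x ^ 2 ^ (j + 1)) * (1 + x) ^ ((m + 2) * 2 ^ (j + 1)) := by
  obtain ⟨w, hw⟩ := exists_one_add_pow_two_pow_eq x j
  have hv : (x ^ 2 ^ j) ^ 4 = 1 := by rwa [← pow_mul, show 2 ^ j * 4 = 2 ^ (j + 2) by ring]
  have h := two_pow_dvd_one_add_sq_mul_pow hv w (2 * m + 3)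
  rwa [← hw, ← pow_mul, ← pow_mul, ← pow_succ,
    show 2 ^ j * (2 * m + 3 + 1) = (m + 2) * 2 ^ (j + 1) by ring] at h

end

/-- For `n = 2^k`, `k ≥ 2`, `l ≥ 3`:
`a_{(l-1)·2^(k-1), l·2^(k-2)+1} + a_{(l-1)·2^(k-1), l·2^(k-2)-2^(k-1)+1} ≡ 0 (mod 2^l)`. -/
theorem ducciCoeff_pair_sum' (k l : ℕ) (hk : 2 ≤ k) (hl : 3 ≤ l) :
    ducciCoeff (2 ^ k) ((l - 1) * 2 ^ (k - 1)) ((l * 2 ^ (k - 2) + 1 : ℕ) : ZMod (2 ^ k)) +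
      ducciCoeff (2 ^ k) ((l - 1) * 2 ^ (k - 1))
        (((l * 2 ^ (k - 2) : ℕ) : ZMod (2 ^ k)) - ((2 ^ (k - 1) : ℕ) : ZMod (2 ^ k)) + 1)
      ≡ 0 [MOD 2 ^ l] := by
  obtain ⟨j, rfl⟩ := Nat.exists_eq_add_of_le' hk
  obtain ⟨m, rfl⟩ := Nat.exists_eq_add_of_le' hl
  simp only [Nat.add_sub_cancel, show j + 2 - 1 = j + 1 from rfl, show m + 3 - 1 = m + 2 from rfl]
  have h2 : (2 : (ZMod (2 ^ (m + 3)))[ZMod (2 ^ (j + 2))]) ^ (m + 3) = 0 := by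
    have := natCast_eq_zero_of_zmodAlgebra (R := (ZMod (2 ^ (m + 3)))[ZMod (2 ^ (j + 2))])
      (2 ^ (m + 3))
    rwa [Nat.cast_pow, Nat.cast_ofNat] at this
  have hzero := (pow_dvd_pow 2 (by omega : m + 3 ≤ 2 * m + 3)).trans
    (two_pow_dvd_one_add_pow_mul_one_add_pow (R := (ZMod (2 ^ (m + 3)))[ZMod (2 ^ (j + 2))])
      (single_one_one_pow_self (2 ^ (j + 2))) m)
  rw [h2, zero_dvd_iff] at hzero
  have hcoeff := congrArg (coeff · (((m + 3) * 2 ^ j : ℕ) : ZMod (2 ^ (j + 2)))) hzero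
  simp only [single_pow, nsmul_one, one_pow, coeff_one_add_single_mul,
    coeff_one_add_single_one_pow] at hcoeff
  rw [← ZMod.natCast_eq_natCast_iff]
  push_cast at hcoeff ⊢
  exact hcoeff
end

section
/- Let k ≥ 2 and l ≥ 2 be integers and n = 2^k. Then the Ducci coefficient satisfies a_{l·2^{k−1}, l·2^{k−2}+1} ≡ 2^{l−1} (mod 2^l), where the second index is read modulo n. -/
open AddMonoidAlgebra

theorem ducciCoeff_cast_eq_coeff {A : Type*} [CommSemiring A] (n r : ℕ) (s : ZMod n) :
    (ducciCoeff n r s : A) = ((1 + single (1 : ZMod n) (1 : A)) ^ r).coeff (s - 1) := by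
  induction r generalizing s with
  | zero =>
    simp [ducciCoeff, one_def, Finsupp.single_apply, eq_comm (a := (0 : ZMod n)), sub_eq_zero]
  | succ r ih => simp [ducciCoeff, pow_succ, mul_add, ih, sub_sub, ← sub_eq_add_neg]

section CommRing

variable {R : Type*} [CommRing R]

theorem exists_one_add_pow_two_pow_succ_eq (x : R) (j : ℕ) :
    ∃ β, (1 + x) ^ 2 ^ (j + 1) = (1 + x ^ 2 ^ j) ^ 2 + 4 * β := by
  induction j with
  | zero => exact ⟨0, by ring⟩
  | succ j ih =>
    obtain ⟨β, hβ⟩ := ih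
    -- `a = b + 2c` gives `a ^ 2 = b ^ 2 + 4 (b c + c ^ 2)`
    set c := x ^ 2 ^ j + 2 * β
    refine ⟨(1 + x ^ 2 ^ (j + 1)) * c + c ^ 2, ?_⟩
    rw [pow_succ 2 (j + 1), pow_mul, hβ]
    ring

theorem add_two_mul_pow_succ_of_sq_eq_two_mul {Z : R} (hZ : Z ^ 2 = 2 * Z) (W : R) (j : ℕ) :
    (Z + 2 * W) ^ (j + 1) =
      2 ^ j * Z * ((1 + W) ^ (j + 1) - W ^ (j + 1)) + 2 ^ (j + 1) * W ^ (j + 1) := by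
  induction j with
  | zero => ring
  | succ j ih =>
    rw [pow_succ, ih]
    linear_combination 2 ^ j * ((1 + W) ^ (j + 1) - W ^ (j + 1)) * hZ

theorem two_pow_mul_add_two_mul_pow {j : ℕ} (h : (2 : R) ^ (j + 1) = 0) (a b : R) (i : ℕ) :
    2 ^ j * (a + 2 * b) ^ i = 2 ^ j * a ^ i := by
  obtain ⟨c, hc⟩ := sub_dvd_pow_sub_pow (a + 2 * b) a i
  linear_combination 2 ^ j * hc + b * c * h

theorem one_add_sq_mul_one_add_pow_succ {Y : R} (hY : Y ^ 4 = 1) (i : ℕ) :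
    (1 + Y ^ 2) * (1 + Y) ^ (i + 1) = 2 ^ i * ((1 + Y ^ 2) * (1 + Y)) := by
  induction i with
  | zero => ring
  | succ i ih =>
    rw [pow_succ (1 + Y), ← mul_assoc, ih]
    linear_combination 2 ^ i * hY

theorem one_add_sq_add_four_mul_pow_succ {Y : R} (hY : Y ^ 4 = 1) (β : R) {j : ℕ} (hj : 1 ≤ j)
    (h2 : (2 : R) ^ (j + 1) = 0) :
    ((1 + Y) ^ 2 + 4 * β) ^ (j + 1) = 2 ^ j * (Y ^ (j + 1) + Y ^ (j + 3)) := by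
  set Z := 1 + Y ^ 2
  set W := Y + 2 * β
  have hZ : Z ^ 2 = 2 * Z := by linear_combination hY
  have hW : 2 ^ j * W ^ (j + 1) = 2 ^ j * Y ^ (j + 1) := two_pow_mul_add_two_mul_pow h2 Y β _
  have hW₁ : 2 ^ j * (1 + W) ^ (j + 1) = 2 ^ j * (1 + Y) ^ (j + 1) := by
    simpa only [add_assoc] using two_pow_mul_add_two_mul_pow h2 (1 + Y) β (j + 1)
  have hZY : Z * (1 + Y) ^ (j + 1) = 2 ^ j * (Z * (1 + Y)) := one_add_sq_mul_one_add_pow_succ hY j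
  have h2j : (2 : R) ^ (j + j) = 0 := pow_eq_zero_of_le (by omega) h2
  calc ((1 + Y) ^ 2 + 4 * β) ^ (j + 1) = (Z + 2 * W) ^ (j + 1) := by ring
    _ = 2 ^ j * Z * ((1 + W) ^ (j + 1) - W ^ (j + 1)) + 2 ^ (j + 1) * W ^ (j + 1) :=
      add_two_mul_pow_succ_of_sq_eq_two_mul hZ W j
    _ = 2 ^ j * (Y ^ (j + 1) + Y ^ (j + 3)) := by
      linear_combination Z * hW₁ - Z * hW + 2 ^ j * hZY + (Z * (1 + Y)) * h2j
        + (W ^ (j + 1) - Y ^ (j + 1) * Z) * h2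

end CommRing

theorem one_add_single_one_pow_mul_two_pow_succ {A : Type*} [CommRing A] {i j : ℕ} (hj : 1 ≤ j)
    (h2 : (2 : A) ^ (j + 1) = 0) :
    (1 + single (1 : ZMod (2 ^ (i + 2))) (1 : A)) ^ ((j + 1) * 2 ^ (i + 1)) =
      2 ^ j * (single (((j + 1) * 2 ^ i : ℕ) : ZMod (2 ^ (i + 2))) 1 +
        single (((j + 3) * 2 ^ i : ℕ) : ZMod (2 ^ (i + 2))) 1) := by
  set X := single (1 : ZMod (2 ^ (i + 2))) (1 : A)
  set Y := X ^ 2 ^ i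
  have hYpow (m : ℕ) : Y ^ m = single ((m * 2 ^ i : ℕ) : ZMod (2 ^ (i + 2))) 1 := by
    simp [Y, X, mul_comm]
  have hY : Y ^ 4 = 1 := by
    rw [hYpow, show 4 * 2 ^ i = 2 ^ (i + 2) by ring, ZMod.natCast_self, one_def]
  have h2X : (2 : A[ZMod (2 ^ (i + 2))]) ^ (j + 1) = 0 := by
    rw [← map_ofNat (algebraMap A A[ZMod (2 ^ (i + 2))]), ← map_pow, h2, map_zero]
  obtain ⟨β, hβ⟩ := exists_one_add_pow_two_pow_succ_eq X i
  rw [mul_comm, pow_mul, hβ, one_add_sq_add_four_mul_pow_succ hY β hj h2X, hYpow, hYpow]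

theorem natCast_add_three_mul_two_pow_ne {i j : ℕ} :
    (((j + 3) * 2 ^ i : ℕ) : ZMod (2 ^ (i + 2))) ≠ ((j + 1) * 2 ^ i : ℕ) := by
  intro h
  have h0 : ((2 ^ (i + 1) : ℕ) : ZMod (2 ^ (i + 2))) = 0 := by
    push_cast at h ⊢
    linear_combination h
  rw [ZMod.natCast_eq_zero_iff, Nat.pow_dvd_pow_iff_le_right (by norm_num)] at h0
  omega

theorem coeff_two_pow_mul_single_add_single {A G : Type*} [CommRing A] [AddCommGroup G] {a b : G}
    (h : b ≠ a) (j : ℕ) : ((2 : A[G]) ^ j * (single a 1 + single b 1)).coeff a = 2 ^ j := by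
  rw [← map_ofNat (algebraMap A A[G]), ← map_pow, ← Algebra.smul_def]
  simp [h]

/-- For `n = 2^k`, `k ≥ 2`, `l ≥ 2`: `a_{l·2^(k-1), l·2^(k-2)+1} ≡ 2^(l-1) (mod 2^l)`. -/
theorem ducciCoeff_central (k l : ℕ) (hk : 2 ≤ k) (hl : 2 ≤ l) :
    ducciCoeff (2 ^ k) (l * 2 ^ (k - 1)) ((l * 2 ^ (k - 2) + 1 : ℕ) : ZMod (2 ^ k))
      ≡ 2 ^ (l - 1) [MOD 2 ^ l] := by
  obtain ⟨i, rfl⟩ : ∃ i, k = i + 2 := ⟨k - 2, by omega⟩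
  obtain ⟨j, rfl⟩ : ∃ j, l = j + 1 := ⟨l - 1, by omega⟩
  have hs : (((j + 1) * 2 ^ i + 1 : ℕ) : ZMod (2 ^ (i + 2))) - 1 = ((j + 1) * 2 ^ i : ℕ) := by
    push_cast; ring
  have h2 : (2 : ZMod (2 ^ (j + 1))) ^ (j + 1) = 0 := by exact_mod_cast ZMod.natCast_self _
  rw [← ZMod.natCast_eq_natCast_iff, ducciCoeff_cast_eq_coeff, show i + 2 - 1 = i + 1 by omega,
    Nat.add_sub_cancel, Nat.add_sub_cancel, hs,
    one_add_single_one_pow_mul_two_pow_succ (by omega) h2,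
    coeff_two_pow_mul_single_add_single natCast_add_three_mul_two_pow_ne]
  norm_cast
end
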